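/- Let T: 𝒜 → 𝒜 be a linear map which preserves power inner products. For a measurable set I ⊆ ℝ^d of finite Lebesgue measure let χ_I denote its indicator function and let τ(I) := {x ∈ ℝ^d : (Tχ_I)(x) ≠ 0} (defined up to a null set). Then: (i) |(Tχ_I)(x)| = 1 for almost every x ∈ τ(I), i.e. Tχ_I = e^{iα_I}·χ_{τ(I)} a.e. for some measurable α_I: ℝ^d → ℝ; (ii) the Lebesgue measures satisfy |τ(I)| = |I|; (iii) if I = I₁ ∪ I₂ with I₁, I₂ disjoint measurable sets, then τ(I) = τ(I₁) ∪ τ(I₂) up to a null set; in particular I₁ ⊆ I implies τ(I₁) ⊆ τ(I) up to a null set. -/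

import Mathlib

open MeasureTheory Complex Finset
open scoped Nat ENNReal

noncomputable section

/-- The domain `ℝ^d`. -/
abbrev Dom (d : ℕ) := Fin d → ℝ

/-- Membership in `𝒜 = L²(ℝ^d) ∩ L^∞(ℝ^d)`. -/
def MemA (d : ℕ) (f : Dom d → ℂ) : Prop :=
  MemLp f 2 (volume : Measure (Dom d)) ∧ MemLp f ⊤ (volume : Measure (Dom d))

/-- `⟨f^k, g^k⟩`, the power inner products. -/
def pip (d : ℕ) (f g : Dom d → ℂ) (k : ℕ) : ℂ :=
  ∫ x : Dom d, (starRingEnd ℂ) (f x) ^ k * g x ^ k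

/-- `S_n(f,g)`, the inner product of quadratic `n`-particle vectors. -/
def Sker (c : ℝ) (d : ℕ) (f g : Dom d → ℂ) (n : ℕ) : ℂ :=
  ∑ p : Nat.Partition n,
    (n ! : ℂ) ^ 2 * 2 ^ (2 * n - 1) *
      ∏ j ∈ p.parts.toFinset,
        (c : ℂ) ^ p.parts.count j /
            (((p.parts.count j)! : ℂ) * (j : ℂ) ^ p.parts.count j) *
          pip d f g j ^ p.parts.count j

/-- `K(f,g) = ⟨Ψ(f),Ψ(g)⟩`, the inner product of quadratic exponential vectors. -/
def Kker (c : ℝ) (d : ℕ) (f g : Dom d → ℂ) : ℂ :=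
  Complex.exp (-(c / 2 : ℂ) *
    ∫ x : Dom d, Complex.log (1 - 4 * (starRingEnd ℂ) (f x) * g x))


/-- The indicator function `χ_I` of a set `I ⊆ ℝ^d`, as an element of `𝒜`. -/
def chi (d : ℕ) (I : Set (Dom d)) : Dom d → ℂ := I.indicator 1

/-- `τ(I) = {x : (Tχ_I)(x) ≠ 0}`, the support of `Tχ_I`. -/
def tau (d : ℕ) (T : (Dom d → ℂ) → (Dom d → ℂ)) (I : Set (Dom d)) : Set (Dom d) :=
  {x | T (chi d I) x ≠ 0}

/-!
For `h = |Tχ_I|²` the hypothesis with `f = g = χ_I` and `k = 1, 2, 3` gives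
`∫ h = ∫ h² = ∫ h³ = |I|`, hence `∫ h (h - 1)² = 0`: `h` takes only the values `0` and `1`,
so `Tχ_I` is a unimodular phase times the indicator of `τ(I)` and `|τ(I)| = ∫ h = |I|`.
For a disjoint union `I = I₁ ∪ I₂`, additivity of `T` puts `τ(I)` inside `τ(I₁) ∪ τ(I₂)` up to
a null set, and `|τ(I₁) ∪ τ(I₂)| ≤ |I₁| + |I₂| = |τ(I)| < ∞` forces equality.
-/

open Filter

section MeasureSpace

variable {α : Type*} [MeasurableSpace α] {μ : Measure α}

lemma integrable_norm_sq_pow_succ {E : Type*} [NormedAddCommGroup E] {f : α → E}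
    (hf₂ : MemLp f 2 μ) (hf_top : MemLp f ∞ μ) (k : ℕ) :
    Integrable (fun x => (‖f x‖ ^ 2) ^ (k + 1)) μ := by
  obtain ⟨C, hC⟩ := eLpNormEssSup_lt_top_iff_isBoundedUnder.1
    (by simpa only [eLpNorm_exponent_top] using hf_top.eLpNorm_lt_top)
  have hsq : Integrable (fun x => ‖f x‖ ^ 2) μ := hf₂.integrable_norm_pow two_ne_zero
  have hsplit : (fun x => (‖f x‖ ^ 2) ^ (k + 1)) = fun x => (‖f x‖ ^ 2) ^ k * ‖f x‖ ^ 2 := by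
    funext x
    ring
  rw [hsplit]
  refine hsq.bdd_mul (c := ((C : ℝ) ^ 2) ^ k) (hsq.aestronglyMeasurable.pow k) ?_
  filter_upwards [hC] with x hx
  have hx : ‖f x‖ ≤ C := hx
  rw [Real.norm_of_nonneg (by positivity)]
  gcongr

lemma ae_eq_zero_or_one_of_integral_pow_eq {h : α → ℝ} (h_nonneg : 0 ≤ h)
    (h₁ : Integrable h μ) (h₂ : Integrable (fun x => h x ^ 2) μ)
    (h₃ : Integrable (fun x => h x ^ 3) μ)
    (e₂ : ∫ x, h x ^ 2 ∂μ = ∫ x, h x ∂μ) (e₃ : ∫ x, h x ^ 3 ∂μ = ∫ x, h x ∂μ) :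
    ∀ᵐ x ∂μ, h x = 0 ∨ h x = 1 := by
  have hq_eq : (fun x => h x * (h x - 1) ^ 2) = fun x => (h x ^ 3 - 2 * h x ^ 2) + h x := by
    funext x
    ring
  have hq : Integrable (fun x => h x * (h x - 1) ^ 2) μ := by
    rw [hq_eq]
    exact (h₃.sub (h₂.const_mul 2)).add h₁
  have hq_zero : ∫ x, h x * (h x - 1) ^ 2 ∂μ = 0 := by
    rw [hq_eq, integral_add ?_ h₁, integral_sub h₃ (h₂.const_mul 2), integral_const_mul, e₂, e₃]
    · ring
    · exact h₃.sub (h₂.const_mul 2)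
  have hq_nonneg : 0 ≤ fun x => h x * (h x - 1) ^ 2 := fun x =>
    mul_nonneg (h_nonneg x) (sq_nonneg _)
  filter_upwards [(integral_eq_zero_iff_of_nonneg hq_nonneg hq).1 hq_zero] with x hx
  rcases mul_eq_zero.1 hx with h0 | h1
  · exact Or.inl h0
  · exact Or.inr (by linarith [pow_eq_zero_iff two_ne_zero |>.1 h1])

lemma exists_measurable_phase {g : α → ℂ} (hg : AEStronglyMeasurable g μ)
    (h01 : ∀ᵐ x ∂μ, ‖g x‖ = 0 ∨ ‖g x‖ = 1) :
    ∃ θ : α → ℝ, Measurable θ ∧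
      g =ᵐ[μ] fun x => Complex.exp (Complex.I * θ x) * (Function.support g).indicator 1 x := by
  refine ⟨fun x => Complex.arg (hg.mk g x), Complex.measurable_arg.comp hg.measurable_mk, ?_⟩
  filter_upwards [hg.ae_eq_mk, h01] with x hx hx01
  rw [← hx]
  rcases hx01 with h0 | h1
  · simp [norm_eq_zero.1 h0]
  · have hgx : g x ≠ 0 := norm_ne_zero_iff.1 (by simp [h1])
    rw [Set.indicator_of_mem hgx, Pi.one_apply, mul_one, mul_comm]
    conv_lhs => rw [← norm_mul_exp_arg_mul_I (g x), h1]
    simp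

variable {E : Type*} [NormedAddCommGroup E] {g : α → E}

lemma nullMeasurableSet_support_of_aestronglyMeasurable (hg : AEStronglyMeasurable g μ) :
    NullMeasurableSet (Function.support g) μ :=
  hg.stronglyMeasurable_mk.measurableSet_support.nullMeasurableSet.congr hg.ae_eq_mk.support.symm

lemma measure_support_eq_ofReal_integral (hg : AEStronglyMeasurable g μ)
    (h01 : ∀ᵐ x ∂μ, ‖g x‖ = 0 ∨ ‖g x‖ = 1) (hint : Integrable (fun x => ‖g x‖ ^ 2) μ) :
    μ (Function.support g) = ENNReal.ofReal (∫ x, ‖g x‖ ^ 2 ∂μ) := by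
  rw [ofReal_integral_eq_lintegral_ofReal hint (ae_of_all _ fun x => by positivity),
    ← lintegral_indicator_one₀ (nullMeasurableSet_support_of_aestronglyMeasurable hg)]
  refine lintegral_congr_ae ?_
  filter_upwards [h01] with x hx
  rcases hx with h0 | h1
  · simp [norm_eq_zero.1 h0]
  · simp [h1, Function.mem_support, ← norm_ne_zero_iff]

lemma support_ae_eq_union_of_ae_eq_add {g₁ g₂ : α → E} (hg : AEStronglyMeasurable g μ)
    (hadd : g =ᵐ[μ] g₁ + g₂)
    (hμ : μ (Function.support g₁) + μ (Function.support g₂) ≤ μ (Function.support g))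
    (hfin : μ (Function.support g) ≠ ∞) :
    Function.support g =ᵐ[μ] (Function.support g₁ ∪ Function.support g₂ : Set α) := by
  refine ae_eq_of_ae_subset_of_measure_ge ?_ ((measure_union_le _ _).trans hμ)
    (nullMeasurableSet_support_of_aestronglyMeasurable hg) ((measure_union_le _ _).trans_lt ?_).ne
  · filter_upwards [hadd] with x hx hgx
    exact Function.support_add g₁ g₂ (show (g₁ + g₂) x ≠ 0 from hx ▸ hgx)
  · exact hμ.trans_lt hfin.lt_top

end MeasureSpace

lemma memA_chi (d : ℕ) {J : Set (Dom d)} (hJ : MeasurableSet J) (hJfin : volume J < ⊤) :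
    MemA d (chi d J) :=
  ⟨memLp_indicator_const 2 hJ (1 : ℂ) (Or.inr hJfin.ne),
    memLp_indicator_const ⊤ hJ (1 : ℂ) (Or.inr hJfin.ne)⟩

lemma pip_chi_self (d : ℕ) {J : Set (Dom d)} (hJ : MeasurableSet J) {k : ℕ} (hk : 1 ≤ k) :
    pip d (chi d J) (chi d J) k = volume.real J := by
  have hk₀ : k ≠ 0 := Nat.one_le_iff_ne_zero.1 hk
  have hpow : (fun x => (starRingEnd ℂ) (chi d J x) ^ k * chi d J x ^ k) =
      J.indicator fun _ => 1 := by
    funext x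
    by_cases hx : x ∈ J <;> simp [chi, hx, hk₀]
  rw [pip, hpow, integral_indicator_const _ hJ]
  simp

lemma pip_self (d : ℕ) (g : Dom d → ℂ) (k : ℕ) :
    pip d g g k = ((∫ x, (‖g x‖ ^ 2) ^ k : ℝ) : ℂ) := by
  rw [pip, ← integral_complex_ofReal]
  congr 1 with x
  rw [← mul_pow, Complex.conj_mul']
  push_cast
  ring

section PowerInnerProducts

variable {d : ℕ} {g : Dom d → ℂ} {c : ℝ}

lemma integral_norm_sq_pow_eq_of_pip_self_eq (hpip : ∀ k : ℕ, 1 ≤ k → pip d g g k = c)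
    (k : ℕ) (hk : 1 ≤ k) : ∫ x, (‖g x‖ ^ 2) ^ k = c :=
  mod_cast (pip_self d g k).symm.trans (hpip k hk)

lemma norm_eq_zero_or_one_of_pip_self_eq (hg : MemA d g)
    (hpip : ∀ k : ℕ, 1 ≤ k → pip d g g k = c) : ∀ᵐ x, ‖g x‖ = 0 ∨ ‖g x‖ = 1 := by
  have hint := integral_norm_sq_pow_eq_of_pip_self_eq hpip
  have hint₁ : ∫ x, ‖g x‖ ^ 2 = c := by simpa using hint 1 le_rfl
  have h01 := ae_eq_zero_or_one_of_integral_pow_eq (fun x => by positivity)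
    (by simpa using integrable_norm_sq_pow_succ hg.1 hg.2 0)
    (integrable_norm_sq_pow_succ hg.1 hg.2 1) (integrable_norm_sq_pow_succ hg.1 hg.2 2)
    ((hint 2 one_le_two).trans hint₁.symm) ((hint 3 (by norm_num)).trans hint₁.symm)
  filter_upwards [h01] with x hx
  rcases hx with h0 | h1
  · exact Or.inl (pow_eq_zero_iff two_ne_zero |>.1 h0)
  · exact Or.inr ((pow_eq_one_iff_of_nonneg (norm_nonneg _) two_ne_zero).1 h1)

lemma volume_support_eq_of_pip_self_eq (hg : MemA d g)
    (hpip : ∀ k : ℕ, 1 ≤ k → pip d g g k = c) :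
    volume (Function.support g) = ENNReal.ofReal c := by
  rw [measure_support_eq_ofReal_integral hg.1.1 (norm_eq_zero_or_one_of_pip_self_eq hg hpip)
    (by simpa using integrable_norm_sq_pow_succ hg.1 hg.2 0)]
  congr 1
  simpa using integral_norm_sq_pow_eq_of_pip_self_eq hpip 1 le_rfl

end PowerInnerProducts

section PreservesPowerInnerProducts

variable {d : ℕ} {T : (Dom d → ℂ) → (Dom d → ℂ)} {J : Set (Dom d)}

lemma pip_T_chi_self
    (hppip : ∀ k : ℕ, 1 ≤ k → ∀ f g, MemA d f → MemA d g →
      pip d (T f) (T g) k = pip d f g k)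
    (hJ : MeasurableSet J) (hJfin : volume J < ⊤) (k : ℕ) (hk : 1 ≤ k) :
    pip d (T (chi d J)) (T (chi d J)) k = volume.real J :=
  (hppip k hk _ _ (memA_chi d hJ hJfin) (memA_chi d hJ hJfin)).trans (pip_chi_self d hJ hk)

lemma ae_norm_T_chi_eq_zero_or_one (hTmem : ∀ f, MemA d f → MemA d (T f))
    (hppip : ∀ k : ℕ, 1 ≤ k → ∀ f g, MemA d f → MemA d g →
      pip d (T f) (T g) k = pip d f g k)
    (hJ : MeasurableSet J) (hJfin : volume J < ⊤) :
    ∀ᵐ x, ‖T (chi d J) x‖ = 0 ∨ ‖T (chi d J) x‖ = 1 :=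
  norm_eq_zero_or_one_of_pip_self_eq (hTmem _ (memA_chi d hJ hJfin))
    (pip_T_chi_self hppip hJ hJfin)

lemma volume_tau (hTmem : ∀ f, MemA d f → MemA d (T f))
    (hppip : ∀ k : ℕ, 1 ≤ k → ∀ f g, MemA d f → MemA d g →
      pip d (T f) (T g) k = pip d f g k)
    (hJ : MeasurableSet J) (hJfin : volume J < ⊤) :
    volume (tau d T J) = volume J :=
  (volume_support_eq_of_pip_self_eq (hTmem _ (memA_chi d hJ hJfin))
    (pip_T_chi_self hppip hJ hJfin)).trans (ofReal_measureReal hJfin.ne)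

lemma tau_union_ae_eq (hTmem : ∀ f, MemA d f → MemA d (T f))
    (hTadd : ∀ f g, MemA d f → MemA d g →
      T (f + g) =ᵐ[(volume : Measure (Dom d))] T f + T g)
    (hppip : ∀ k : ℕ, 1 ≤ k → ∀ f g, MemA d f → MemA d g →
      pip d (T f) (T g) k = pip d f g k)
    {I₁ I₂ : Set (Dom d)} (hI₁ : MeasurableSet I₁) (hI₂ : MeasurableSet I₂)
    (hdisj : Disjoint I₁ I₂) (hfin : volume (I₁ ∪ I₂) < ⊤) :
    tau d T (I₁ ∪ I₂) =ᵐ[volume] (tau d T I₁ ∪ tau d T I₂ : Set (Dom d)) := by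
  have hfin₁ := (measure_mono Set.subset_union_left).trans_lt hfin
  have hfin₂ := (measure_mono Set.subset_union_right).trans_lt hfin
  have hadd := hTadd _ _ (memA_chi d hI₁ hfin₁) (memA_chi d hI₂ hfin₂)
  rw [← show chi d (I₁ ∪ I₂) = chi d I₁ + chi d I₂ from
    Set.indicator_union_of_disjoint hdisj 1] at hadd
  have hvol := volume_tau hTmem hppip (hI₁.union hI₂) hfin
  refine support_ae_eq_union_of_ae_eq_add (hTmem _ (memA_chi d (hI₁.union hI₂) hfin)).1.1 hadd
    ?_ (hvol ▸ hfin.ne)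
  show volume (tau d T I₁) + volume (tau d T I₂) ≤ volume (tau d T (I₁ ∪ I₂))
  rw [volume_tau hTmem hppip hI₁ hfin₁, volume_tau hTmem hppip hI₂ hfin₂, hvol,
    measure_union hdisj hI₂]

end PreservesPowerInnerProducts

theorem statement11 (d : ℕ)
    (T : (Dom d → ℂ) → (Dom d → ℂ))
    (hTmem : ∀ f, MemA d f → MemA d (T f))
    (hTadd : ∀ f g, MemA d f → MemA d g →
      T (f + g) =ᵐ[(volume : Measure (Dom d))] T f + T g)
    (hppip : ∀ k : ℕ, 1 ≤ k → ∀ f g, MemA d f → MemA d g →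
      pip d (T f) (T g) k = pip d f g k)
    (I : Set (Dom d)) (hI : MeasurableSet I)
    (hIfin : volume I < ⊤) :
    (∀ᵐ x ∂(volume : Measure (Dom d)), x ∈ tau d T I → ‖T (chi d I) x‖ = 1) ∧
    (∃ αI : Dom d → ℝ, Measurable αI ∧
      T (chi d I) =ᵐ[(volume : Measure (Dom d))]
        fun x => Complex.exp (Complex.I * αI x) * chi d (tau d T I) x) ∧
    volume (tau d T I) = volume I ∧
    (∀ I₁ I₂ : Set (Dom d), MeasurableSet I₁ → MeasurableSet I₂ →
      Disjoint I₁ I₂ → I = I₁ ∪ I₂ →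
      ∀ᵐ x ∂(volume : Measure (Dom d)),
        x ∈ tau d T I ↔ x ∈ tau d T I₁ ∪ tau d T I₂) ∧
    (∀ I₁ : Set (Dom d), MeasurableSet I₁ → I₁ ⊆ I →
      ∀ᵐ x ∂(volume : Measure (Dom d)), x ∈ tau d T I₁ → x ∈ tau d T I) := by
  have h01 := ae_norm_T_chi_eq_zero_or_one hTmem hppip hI hIfin
  have hTchi := (hTmem _ (memA_chi d hI hIfin)).1.1
  have hunion : ∀ I₁ I₂ : Set (Dom d), MeasurableSet I₁ → MeasurableSet I₂ →
      Disjoint I₁ I₂ → I = I₁ ∪ I₂ →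
      ∀ᵐ x ∂(volume : Measure (Dom d)), x ∈ tau d T I ↔ x ∈ tau d T I₁ ∪ tau d T I₂ := by
    rintro I₁ I₂ hI₁ hI₂ hdisj rfl
    exact eventuallyEq_set.1 (tau_union_ae_eq hTmem hTadd hppip hI₁ hI₂ hdisj hIfin)
  refine ⟨?_, exists_measurable_phase hTchi h01, volume_tau hTmem hppip hI hIfin, hunion, ?_⟩
  · filter_upwards [h01] with x hx hxτ using hx.resolve_left (norm_ne_zero_iff.2 hxτ)
  · intro I₁ hI₁ hsub
    filter_upwards [hunion I₁ (I \ I₁) hI₁ (hI.diff hI₁) Set.disjoint_sdiff_right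
      (Set.union_sdiff_cancel hsub).symm] with x hx hxτ using hx.2 (Or.inl hxτ)
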